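/- arXiv:nlin/0703062 — 4 statements merged into one kernel-verified Lean document; each statement's English description precedes it below -/
import Mathlib

section
/- For the bivector P_1^{(2)} with a = (0,0,1), b = (b_1, ib_1, 0), the roots q_1, q_2 of the polynomial A(λ) = λ^2 + (t_3 − s_3)λ + (t_1 + it_2)(s_1 + is_2)b_1^2 − s_3 t_3 satisfy {q_1, q_2}_0 = 0 where {·,·}_0 is the canonical so*(4) bracket; equivalently, the coefficients satisfy {t_3 − s_3, (t_1+it_2)(s_1+is_2)b_1^2 − s_3t_3}_0 = 0. -/
/-!
The bracket is a biderivation, so it is determined by the brackets of the coordinates, which are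
the structure relations of `so(3) ⊕ so(3)`. The function `t₃ − s₃` generates opposite rotations
about the third axis in the two factors: `s₁ + i s₂` and `t₁ + i t₂` are eigenvectors of
`{t₃ − s₃, ·}` with eigenvalues `i` and `−i`, so their product commutes with `t₃ − s₃`, and so
does `s₃ t₃`.
-/

noncomputable section

/-- Phase space `ℂ^6`. -/
abbrev V6 : Type := Fin 6 → ℂ

/-- Partial derivative `∂ᵢ f` at `z`. -/
def pd (i : Fin 6) (f : V6 → ℂ) (z : V6) : ℂ := fderiv ℂ f z (Pi.single i 1)

/-- The antisymmetric matrix `v_M` with `v_M w = v × w`. -/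
def cm (v : Fin 3 → ℂ) : Matrix (Fin 3) (Fin 3) ℂ :=
  !![0, v 2, -v 1; -v 2, 0, v 0; v 1, -v 0, 0]

/-- Euclidean inner product. -/
def dot (u v : Fin 3 → ℂ) : ℂ := ∑ i, u i * v i

/-- Cross product. -/
def cross (u v : Fin 3 → ℂ) : Fin 3 → ℂ :=
  ![u 1 * v 2 - u 2 * v 1, u 2 * v 0 - u 0 * v 2, u 0 * v 1 - u 1 * v 0]

/-- Outer product `(x ⊗ y)_{ij} = xᵢ yⱼ`. -/
def outer (u v : Fin 3 → ℂ) : Matrix (Fin 3) (Fin 3) ℂ := Matrix.of fun i j => u i * v j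

def sv (z : V6) (i : Fin 3) : ℂ := z (Fin.castAdd 3 i)
def tv (z : V6) (i : Fin 3) : ℂ := z (Fin.natAdd 3 i)

/-- Build a 6×6 matrix from four 3×3 blocks. -/
def bb (A B C D : Matrix (Fin 3) (Fin 3) ℂ) : Matrix (Fin 6) (Fin 6) ℂ :=
  (Matrix.fromBlocks A B C D).submatrix
    (finSumFinEquiv (m := 3) (n := 3)).symm (finSumFinEquiv (m := 3) (n := 3)).symm

/-- The canonical Lie–Poisson bivector of `so(3) ⊕ so(3)`. -/
def P0 (z : V6) : Matrix (Fin 6) (Fin 6) ℂ := bb (cm (sv z)) 0 0 (cm (tv z))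

/-- The bracket `{f,g} = Σ P^{ij} ∂ᵢf ∂ⱼg` associated with a bivector `P`. -/
def pb (P : V6 → Matrix (Fin 6) (Fin 6) ℂ) (f g : V6 → ℂ) (z : V6) : ℂ :=
  ∑ i, ∑ j, P z i j * pd i f z * pd j g z

section PartialDerivative

variable {f g : V6 → ℂ} {z : V6}

lemma pd_coord (i k : Fin 6) (z : V6) : pd i (fun w => w k) z = (Pi.single i 1 : V6) k := by
  rw [pd, (hasFDerivAt_apply k z).fderiv]
  rfl

lemma pd_const (i : Fin 6) (c : ℂ) (z : V6) : pd i (fun _ => c) z = 0 := by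
  simp [pd]

lemma pd_add (i : Fin 6) (hf : DifferentiableAt ℂ f z) (hg : DifferentiableAt ℂ g z) :
    pd i (fun w => f w + g w) z = pd i f z + pd i g z := by
  rw [pd, fderiv_fun_add hf hg]
  rfl

lemma pd_sub (i : Fin 6) (hf : DifferentiableAt ℂ f z) (hg : DifferentiableAt ℂ g z) :
    pd i (fun w => f w - g w) z = pd i f z - pd i g z := by
  rw [pd, fderiv_fun_sub hf hg]
  rfl

lemma pd_mul (i : Fin 6) (hf : DifferentiableAt ℂ f z) (hg : DifferentiableAt ℂ g z) :
    pd i (fun w => f w * g w) z = pd i f z * g z + f z * pd i g z := by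
  simp only [pd, fderiv_fun_mul hf hg, add_apply, smul_apply, smul_eq_mul]
  ring

end PartialDerivative

section Bracket

variable (P : V6 → Matrix (Fin 6) (Fin 6) ℂ) {f g h : V6 → ℂ} {z : V6}

lemma pb_coord (i j : Fin 6) (z : V6) : pb P (fun w => w i) (fun w => w j) z = P z i j := by
  simp [pb, pd_coord, Pi.single_apply]

lemma pb_const_right (f : V6 → ℂ) (c : ℂ) (z : V6) : pb P f (fun _ => c) z = 0 := by
  simp [pb, pd_const]

lemma pb_sub_left (hf : DifferentiableAt ℂ f z) (hg : DifferentiableAt ℂ g z) :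
    pb P (fun w => f w - g w) h z = pb P f h z - pb P g h z := by
  simp only [pb, pd_sub _ hf hg, mul_sub, sub_mul, Finset.sum_sub_distrib]

lemma pb_add_right (hg : DifferentiableAt ℂ g z) (hh : DifferentiableAt ℂ h z) :
    pb P f (fun w => g w + h w) z = pb P f g z + pb P f h z := by
  simp only [pb, pd_add _ hg hh, mul_add, Finset.sum_add_distrib]

lemma pb_sub_right (hg : DifferentiableAt ℂ g z) (hh : DifferentiableAt ℂ h z) :
    pb P f (fun w => g w - h w) z = pb P f g z - pb P f h z := by
  simp only [pb, pd_sub _ hg hh, mul_sub, Finset.sum_sub_distrib]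

lemma pb_mul_right (hg : DifferentiableAt ℂ g z) (hh : DifferentiableAt ℂ h z) :
    pb P f (fun w => g w * h w) z = pb P f g z * h z + g z * pb P f h z := by
  simp only [pb, pd_mul _ hg hh, mul_add, Finset.sum_add_distrib, Finset.sum_mul, Finset.mul_sum]
  simp only [mul_comm, mul_left_comm]

end Bracket

@[fun_prop]
lemma differentiable_sv : Differentiable ℂ sv := by
  unfold sv
  fun_prop

@[fun_prop]
lemma differentiable_tv : Differentiable ℂ tv := by
  unfold tv
  fun_prop

lemma pb_P0_sv_sv (i j : Fin 3) (z : V6) :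
    pb P0 (fun w => sv w i) (fun w => sv w j) z = cm (sv z) i j := by
  simp only [sv, pb_coord, P0, bb, Matrix.submatrix_apply, finSumFinEquiv_symm_apply_castAdd,
    Matrix.fromBlocks_apply₁₁]

lemma pb_P0_tv_tv (i j : Fin 3) (z : V6) :
    pb P0 (fun w => tv w i) (fun w => tv w j) z = cm (tv z) i j := by
  simp only [tv, pb_coord, P0, bb, Matrix.submatrix_apply, finSumFinEquiv_symm_apply_natAdd,
    Matrix.fromBlocks_apply₂₂]

lemma pb_P0_sv_tv (i j : Fin 3) (z : V6) : pb P0 (fun w => sv w i) (fun w => tv w j) z = 0 := by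
  simp only [sv, tv, pb_coord, P0, bb, Matrix.submatrix_apply, finSumFinEquiv_symm_apply_castAdd,
    finSumFinEquiv_symm_apply_natAdd, Matrix.fromBlocks_apply₁₂, Matrix.zero_apply]

lemma pb_P0_tv_sv (i j : Fin 3) (z : V6) : pb P0 (fun w => tv w i) (fun w => sv w j) z = 0 := by
  simp only [sv, tv, pb_coord, P0, bb, Matrix.submatrix_apply, finSumFinEquiv_symm_apply_castAdd,
    finSumFinEquiv_symm_apply_natAdd, Matrix.fromBlocks_apply₂₁, Matrix.zero_apply]

/-- the coefficients of the minimal polynomial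
`A(λ) = λ² + (t₃−s₃)λ + (t₁+it₂)(s₁+is₂)b₁² − s₃t₃` Poisson-commute, hence its
roots `q₁,q₂` satisfy `{q₁,q₂}₀ = 0`. -/
theorem minpoly_coeffs_commute_P12 (b1 : ℂ) (z : V6) :
    pb P0 (fun w => tv w 2 - sv w 2)
      (fun w => (tv w 0 + Complex.I * tv w 1) * (sv w 0 + Complex.I * sv w 1) * b1 ^ 2
        - sv w 2 * tv w 2) z = 0 := by
  simp (disch := fun_prop) only [pb_sub_left, pb_sub_right, pb_mul_right, pb_add_right,
    pb_const_right, pb_P0_sv_sv, pb_P0_tv_tv, pb_P0_sv_tv, pb_P0_tv_sv]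
  simp only [cm, Matrix.of_apply, Matrix.cons_val', Matrix.cons_val_zero, Matrix.cons_val_one,
    Matrix.cons_val, Matrix.cons_val_fin_one]
  linear_combination b1 ^ 2 * (tv z 1 * sv z 0 - tv z 0 * sv z 1) * Complex.I_sq
end
end

section
/- Let A(λ) = λ^2 + (t_3 − s_3)λ + (t_1 + it_2)(s_1 + is_2)b_1^2 − s_3t_3 and B(λ) = (s_1 − is_2 + b_1^2(t_1 + it_2))λ + t_3(s_1 − is_2) + b_1^2 s_3(t_1 + it_2). Then with respect to the canonical so*(4) bracket {·,·}_0, for all λ, μ: {A(λ), A(μ)}_0 = 0, {B(λ), B(μ)}_0 = 0, and (λ − μ){A(λ), B(μ)}_0 = i(B(λ)A(μ) − A(λ)B(μ)). -/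
/-!
The canonical bracket is the Lie–Poisson bracket of `so(3) ⊕ so(3)`, that is
`{f, g} = s · (∇ₛf × ∇ₛg) + t · (∇ₜf × ∇ₜg)`. The gradients of `A(λ)` and `B(λ)` are
affine in `λ` and are read off from their directional derivatives; substituting them turns
all three relations into polynomial identities in `s, t, λ, μ, b₁` that hold modulo `i² = -1`.
-/

noncomputable section

/-- `A(λ)` for the second bivector. -/
def Apoly (b1 : ℂ) (lam : ℂ) (z : V6) : ℂ :=
  lam ^ 2 + (tv z 2 - sv z 2) * lam
    + (tv z 0 + Complex.I * tv z 1) * (sv z 0 + Complex.I * sv z 1) * b1 ^ 2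
    - sv z 2 * tv z 2

/-- `B(λ)` for the second bivector. -/
def Bpoly (b1 : ℂ) (lam : ℂ) (z : V6) : ℂ :=
  (sv z 0 - Complex.I * sv z 1 + b1 ^ 2 * (tv z 0 + Complex.I * tv z 1)) * lam
    + tv z 2 * (sv z 0 - Complex.I * sv z 1)
    + b1 ^ 2 * sv z 2 * (tv z 0 + Complex.I * tv z 1)

open Complex

def sgrad (f : V6 → ℂ) (z : V6) (k : Fin 3) : ℂ := pd (Fin.castAdd 3 k) f z

def tgrad (f : V6 → ℂ) (z : V6) (k : Fin 3) : ℂ := pd (Fin.natAdd 3 k) f z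

section BlockMatrix

variable (A B C D : Matrix (Fin 3) (Fin 3) ℂ) (i j : Fin 3)

theorem bb_castAdd_castAdd : bb A B C D (Fin.castAdd 3 i) (Fin.castAdd 3 j) = A i j := by
  simp only [bb, Matrix.submatrix_apply, finSumFinEquiv_symm_apply_castAdd,
    Matrix.fromBlocks_apply₁₁]

theorem bb_castAdd_natAdd : bb A B C D (Fin.castAdd 3 i) (Fin.natAdd 3 j) = B i j := by
  simp only [bb, Matrix.submatrix_apply, finSumFinEquiv_symm_apply_castAdd,
    finSumFinEquiv_symm_apply_natAdd, Matrix.fromBlocks_apply₁₂]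

theorem bb_natAdd_castAdd : bb A B C D (Fin.natAdd 3 i) (Fin.castAdd 3 j) = C i j := by
  simp only [bb, Matrix.submatrix_apply, finSumFinEquiv_symm_apply_castAdd,
    finSumFinEquiv_symm_apply_natAdd, Matrix.fromBlocks_apply₂₁]

theorem bb_natAdd_natAdd : bb A B C D (Fin.natAdd 3 i) (Fin.natAdd 3 j) = D i j := by
  simp only [bb, Matrix.submatrix_apply, finSumFinEquiv_symm_apply_natAdd,
    Matrix.fromBlocks_apply₂₂]

end BlockMatrix

theorem sum_cm_mul_mul (v a b : Fin 3 → ℂ) :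
    ∑ i, ∑ j, cm v i j * a i * b j = dot v (cross a b) := by
  simp only [cm, dot, cross, Fin.sum_univ_three, Matrix.of_apply, Matrix.cons_val',
    Matrix.cons_val_fin_one, Matrix.cons_val_zero, Matrix.cons_val_one, Matrix.cons_val]
  ring

theorem pb_P0_eq_dot_cross (f g : V6 → ℂ) (z : V6) :
    pb P0 f g z = dot (sv z) (cross (sgrad f z) (sgrad g z))
      + dot (tv z) (cross (tgrad f z) (tgrad g z)) := by
  have sum_split (F : Fin 6 → ℂ) :
      ∑ i, F i = ∑ i : Fin 3, F (Fin.castAdd 3 i) + ∑ i : Fin 3, F (Fin.natAdd 3 i) :=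
    Fin.sum_univ_add (a := 3) (b := 3) F
  simp only [pb, P0, sum_split, bb_castAdd_castAdd, bb_castAdd_natAdd, bb_natAdd_castAdd,
    bb_natAdd_natAdd, Matrix.zero_apply, zero_mul, Finset.sum_const_zero, add_zero, zero_add,
    ← sum_cm_mul_mul]
  rfl

section CoordinateVectors

variable (k : Fin 3)

@[fun_prop]
theorem differentiable_sv_s12 : Differentiable ℂ (fun z : V6 => sv z k) :=
  (ContinuousLinearMap.proj (Fin.castAdd 3 k) : V6 →L[ℂ] ℂ).differentiable

@[fun_prop]
theorem differentiable_tv_s12 : Differentiable ℂ (fun z : V6 => tv z k) :=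
  (ContinuousLinearMap.proj (Fin.natAdd 3 k) : V6 →L[ℂ] ℂ).differentiable

theorem fderiv_sv_apply (z v : V6) : fderiv ℂ (fun z : V6 => sv z k) z v = sv v k :=
  congrArg (· v) (ContinuousLinearMap.proj (Fin.castAdd 3 k) : V6 →L[ℂ] ℂ).fderiv

theorem fderiv_tv_apply (z v : V6) : fderiv ℂ (fun z : V6 => tv z k) z v = tv v k :=
  congrArg (· v) (ContinuousLinearMap.proj (Fin.natAdd 3 k) : V6 →L[ℂ] ℂ).fderiv

theorem sv_single_castAdd : sv (Pi.single (Fin.castAdd 3 k) 1) = Pi.single k 1 := by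
  ext l
  simp only [sv, Pi.single_apply, Fin.ext_iff, Fin.val_castAdd]

theorem tv_single_castAdd : tv (Pi.single (Fin.castAdd 3 k) 1) = 0 := by
  ext l
  simp only [tv, Fin.natAdd_eq_addNat, Pi.single_apply, Fin.ext_iff, Fin.val_addNat,
    Fin.val_castAdd, Pi.zero_apply, ite_eq_right_iff, one_ne_zero, imp_false]
  omega

theorem sv_single_natAdd : sv (Pi.single (Fin.natAdd 3 k) 1) = 0 := by
  ext l
  simp only [sv, Fin.natAdd_eq_addNat, Pi.single_apply, Fin.ext_iff, Fin.val_castAdd,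
    Fin.val_addNat, Pi.zero_apply, ite_eq_right_iff, one_ne_zero, imp_false]
  omega

theorem tv_single_natAdd : tv (Pi.single (Fin.natAdd 3 k) 1) = Pi.single k 1 := by
  ext l
  simp only [tv, Fin.natAdd_eq_addNat, Pi.single_apply, Fin.ext_iff, Fin.val_addNat,
    Nat.add_right_cancel_iff]

end CoordinateVectors

section Gradients

variable (b1 lam : ℂ) (z : V6)

theorem fderiv_Apoly_apply (v : V6) :
    fderiv ℂ (Apoly b1 lam) z v =
      (tv v 2 - sv v 2) * lam
        + ((tv v 0 + I * tv v 1) * (sv z 0 + I * sv z 1)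
          + (tv z 0 + I * tv z 1) * (sv v 0 + I * sv v 1)) * b1 ^ 2
        - (sv v 2 * tv z 2 + sv z 2 * tv v 2) := by
  unfold Apoly
  simp (disch := fun_prop) only [fderiv_fun_add, fderiv_fun_sub, fderiv_fun_mul,
    fderiv_fun_const, add_apply, sub_apply, smul_apply, zero_apply,
    Pi.zero_apply, smul_eq_mul, fderiv_sv_apply, fderiv_tv_apply]
  ring

theorem fderiv_Bpoly_apply (v : V6) :
    fderiv ℂ (Bpoly b1 lam) z v =
      (sv v 0 - I * sv v 1 + b1 ^ 2 * (tv v 0 + I * tv v 1)) * lam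
        + (tv v 2 * (sv z 0 - I * sv z 1) + tv z 2 * (sv v 0 - I * sv v 1))
        + b1 ^ 2 * (sv v 2 * (tv z 0 + I * tv z 1) + sv z 2 * (tv v 0 + I * tv v 1)) := by
  unfold Bpoly
  simp (disch := fun_prop) only [fderiv_fun_add, fderiv_fun_sub, fderiv_fun_mul,
    fderiv_fun_const, add_apply, sub_apply, smul_apply, zero_apply,
    Pi.zero_apply, smul_eq_mul, fderiv_sv_apply, fderiv_tv_apply]
  ring

theorem sgrad_Apoly :
    sgrad (Apoly b1 lam) z =
      ![(tv z 0 + I * tv z 1) * b1 ^ 2, I * ((tv z 0 + I * tv z 1) * b1 ^ 2),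
        -(lam + tv z 2)] := by
  ext k
  simp only [sgrad, pd, fderiv_Apoly_apply, sv_single_castAdd, tv_single_castAdd]
  fin_cases k <;>
    simp only [Fin.zero_eta, Fin.mk_one, Fin.reduceFinMk, Fin.isValue, Pi.single_apply,
      Fin.reduceEq, ↓reduceIte, Pi.zero_apply, Matrix.cons_val_zero, Matrix.cons_val_one,
      Matrix.cons_val] <;> ring

theorem tgrad_Apoly :
    tgrad (Apoly b1 lam) z =
      ![(sv z 0 + I * sv z 1) * b1 ^ 2, I * ((sv z 0 + I * sv z 1) * b1 ^ 2), lam - sv z 2] := by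
  ext k
  simp only [tgrad, pd, fderiv_Apoly_apply, sv_single_natAdd, tv_single_natAdd]
  fin_cases k <;>
    simp only [Fin.zero_eta, Fin.mk_one, Fin.reduceFinMk, Fin.isValue, Pi.single_apply,
      Fin.reduceEq, ↓reduceIte, Pi.zero_apply, Matrix.cons_val_zero, Matrix.cons_val_one,
      Matrix.cons_val] <;> ring

theorem sgrad_Bpoly :
    sgrad (Bpoly b1 lam) z =
      ![lam + tv z 2, -I * (lam + tv z 2), b1 ^ 2 * (tv z 0 + I * tv z 1)] := by
  ext k
  simp only [sgrad, pd, fderiv_Bpoly_apply, sv_single_castAdd, tv_single_castAdd]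
  fin_cases k <;>
    simp only [Fin.zero_eta, Fin.mk_one, Fin.reduceFinMk, Fin.isValue, Pi.single_apply,
      Fin.reduceEq, ↓reduceIte, Pi.zero_apply, Matrix.cons_val_zero, Matrix.cons_val_one,
      Matrix.cons_val] <;> ring

theorem tgrad_Bpoly :
    tgrad (Bpoly b1 lam) z =
      ![b1 ^ 2 * (lam + sv z 2), I * (b1 ^ 2 * (lam + sv z 2)), sv z 0 - I * sv z 1] := by
  ext k
  simp only [tgrad, pd, fderiv_Bpoly_apply, sv_single_natAdd, tv_single_natAdd]
  fin_cases k <;>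
    simp only [Fin.zero_eta, Fin.mk_one, Fin.reduceFinMk, Fin.isValue, Pi.single_apply,
      Fin.reduceEq, ↓reduceIte, Pi.zero_apply, Matrix.cons_val_zero, Matrix.cons_val_one,
      Matrix.cons_val] <;> ring

end Gradients

section Brackets

variable (b1 lam mu : ℂ) (z : V6)

theorem pb_P0_Apoly_Apoly : pb P0 (Apoly b1 lam) (Apoly b1 mu) z = 0 := by
  simp only [pb_P0_eq_dot_cross, sgrad_Apoly, tgrad_Apoly, dot, cross, Fin.sum_univ_three,
    Matrix.cons_val]
  grind [I_sq]

theorem pb_P0_Bpoly_Bpoly : pb P0 (Bpoly b1 lam) (Bpoly b1 mu) z = 0 := by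
  simp only [pb_P0_eq_dot_cross, sgrad_Bpoly, tgrad_Bpoly, dot, cross, Fin.sum_univ_three,
    Matrix.cons_val]
  grind [I_sq]

theorem sub_mul_pb_P0_Apoly_Bpoly :
    (lam - mu) * pb P0 (Apoly b1 lam) (Bpoly b1 mu) z =
      I * (Bpoly b1 lam z * Apoly b1 mu z - Apoly b1 lam z * Bpoly b1 mu z) := by
  simp only [pb_P0_eq_dot_cross, sgrad_Apoly, tgrad_Apoly, sgrad_Bpoly, tgrad_Bpoly, dot, cross,
    Fin.sum_univ_three, Matrix.cons_val, Apoly, Bpoly]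
  grind [I_sq]

end Brackets

/-- the separation relations
`{A(λ),A(μ)}₀ = {B(λ),B(μ)}₀ = 0` and
`(λ−μ){A(λ),B(μ)}₀ = i(B(λ)A(μ) − A(λ)B(μ))`. -/
theorem AB_relations (b1 : ℂ) (lam mu : ℂ) (z : V6) :
    pb P0 (Apoly b1 lam) (Apoly b1 mu) z = 0 ∧
    pb P0 (Bpoly b1 lam) (Bpoly b1 mu) z = 0 ∧
    (lam - mu) * pb P0 (Apoly b1 lam) (Bpoly b1 mu) z =
      Complex.I * (Bpoly b1 lam z * Apoly b1 mu z - Apoly b1 lam z * Bpoly b1 mu z) :=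
  ⟨pb_P0_Apoly_Apoly b1 lam mu z, pb_P0_Bpoly_Bpoly b1 lam mu z,
    sub_mul_pb_P0_Apoly_Bpoly b1 lam mu z⟩
end
end

section
/- Let a = (0,0,1), b = (b_1, ib_1, 0), c = (c_1, −ic_1, 0). The quadratic bivector P_1^{(3)} with blocks ⟨a,s⟩ s_M, i[(a×s)⊗(a×t) + (b×s)⊗(c×t)], the negative transpose, and ⟨a,t⟩ t_M, annihilates the Casimirs |s|^2 and |t|^2: P_1^{(3)} d(|s|^2) = P_1^{(3)} d(|t|^2) = 0. -/
noncomputable section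

/-- The quadratic bivector `P₁⁽³⁾` with `a = (0,0,1)` (so `|a| = 1`). -/
def P13 (b c : Fin 3 → ℂ) (z : V6) : Matrix (Fin 6) (Fin 6) ℂ :=
  let a : Fin 3 → ℂ := ![0, 0, 1]
  bb ((dot a (sv z)) • cm (sv z))
     (Complex.I • (outer (cross a (sv z)) (cross a (tv z))
        + outer (cross b (sv z)) (cross c (tv z))))
     ((-Complex.I) • (outer (cross a (sv z)) (cross a (tv z))
        + outer (cross b (sv z)) (cross c (tv z))).transpose)
     ((dot a (tv z)) • cm (tv z))

/-! The gradient of `|s|²` is `(2s, 0)`, so `P₁⁽³⁾ d|s|²` has blocks `2⟨a,s⟩ s_M s` and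
`-2i [⟨a×s, s⟩ (a×t) + ⟨b×s, s⟩ (c×t)]`; both vanish because `s × s = 0` and `u × s ⊥ s`.
The same argument with the roles of `s` and `t` exchanged handles `|t|²`. -/

open scoped Matrix

def blockVec (x y : Fin 3 → ℂ) : V6 := Sum.elim x y ∘ (finSumFinEquiv (m := 3) (n := 3)).symm

lemma blockVec_finSumFinEquiv (x y : Fin 3 → ℂ) (k : Fin 3 ⊕ Fin 3) :
    blockVec x y (finSumFinEquiv k) = Sum.elim x y k := by
  simp only [blockVec, Function.comp_apply, Equiv.symm_apply_apply]

lemma blockVec_zero : blockVec 0 0 = 0 := by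
  simp [blockVec]

lemma pd_dot_comp_self (e : Fin 3 → Fin 6) (j : Fin 6) (z : V6) :
    pd j (fun w => dot (w ∘ e) (w ∘ e)) z = 2 * dot (z ∘ e) ((Pi.single j 1 : V6) ∘ e) := by
  have hderiv := HasFDerivAt.fun_sum (u := Finset.univ)
    fun i _ => (hasFDerivAt_apply (𝕜 := ℂ) (e i) z).fun_mul (hasFDerivAt_apply (e i) z)
  rw [pd, show (fun w : V6 => dot (w ∘ e) (w ∘ e)) = fun w => ∑ i, w (e i) * w (e i) from rfl,
    hderiv.fderiv]
  simp only [dot, Finset.mul_sum, FunLike.coe_sum, Finset.sum_apply, add_apply, smul_apply,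
    smul_eq_mul, ContinuousLinearMap.proj_apply, Function.comp_apply]
  exact Finset.sum_congr rfl fun i _ => by ring

lemma sv_eq_comp (w : V6) : sv w = w ∘ finSumFinEquiv (m := 3) (n := 3) ∘ Sum.inl := rfl

lemma tv_eq_comp (w : V6) : tv w = w ∘ finSumFinEquiv (m := 3) (n := 3) ∘ Sum.inr := rfl

lemma grad_dot_sv_self (z : V6) :
    (fun j => pd j (fun w => dot (sv w) (sv w)) z) = (2 : ℂ) • blockVec (sv z) 0 := by
  ext j
  obtain ⟨k | k, rfl⟩ := (finSumFinEquiv (m := 3) (n := 3)).surjective j <;>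
    simp only [sv_eq_comp, pd_dot_comp_self] <;>
    simp [blockVec_finSumFinEquiv, dot, Pi.single_apply]

lemma grad_dot_tv_self (z : V6) :
    (fun j => pd j (fun w => dot (tv w) (tv w)) z) = (2 : ℂ) • blockVec 0 (tv z) := by
  ext j
  obtain ⟨k | k, rfl⟩ := (finSumFinEquiv (m := 3) (n := 3)).surjective j <;>
    simp only [tv_eq_comp, pd_dot_comp_self] <;>
    simp [blockVec_finSumFinEquiv, dot, Pi.single_apply]

lemma bb_mulVec_blockVec (A B C D : Matrix (Fin 3) (Fin 3) ℂ) (x y : Fin 3 → ℂ) :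
    bb A B C D *ᵥ blockVec x y = blockVec (A *ᵥ x + B *ᵥ y) (C *ᵥ x + D *ᵥ y) := by
  rw [bb, blockVec, blockVec, Matrix.submatrix_mulVec_equiv, Equiv.symm_symm, Function.comp_assoc,
    Equiv.symm_comp_self, Function.comp_id, Matrix.fromBlocks_mulVec]
  rfl

lemma cross_eq_crossProduct (u v : Fin 3 → ℂ) : cross u v = u ⨯₃ v := (cross_apply u v).symm

-- The sign convention of `cm` gives `w × v`, not `v × w`.
lemma cm_mulVec (v w : Fin 3 → ℂ) : cm v *ᵥ w = w ⨯₃ v := by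
  ext i
  fin_cases i <;> simp [cm, cross_apply, Matrix.mulVec, dotProduct, Fin.sum_univ_three] <;> ring

lemma outer_mulVec (u v w : Fin 3 → ℂ) : outer u v *ᵥ w = (w ⬝ᵥ v) • u := by
  ext i
  simp [outer, Matrix.mulVec, dotProduct, Finset.mul_sum, mul_comm, mul_left_comm]

lemma transpose_outer (u v : Fin 3 → ℂ) : (outer u v)ᵀ = outer v u := by
  ext i j
  simp [outer, mul_comm]

theorem P13_mulVec_blockVec_sv_zero (b c : Fin 3 → ℂ) (z : V6) :
    P13 b c z *ᵥ blockVec (sv z) 0 = 0 := by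
  simp only [P13, bb_mulVec_blockVec, Matrix.mulVec_zero, add_zero, Matrix.smul_mulVec,
    cm_mulVec, cross_self, Matrix.transpose_add, transpose_outer, Matrix.add_mulVec, outer_mulVec,
    cross_eq_crossProduct, dot_cross_self, zero_smul, smul_zero, blockVec_zero]

theorem P13_mulVec_blockVec_zero_tv (b c : Fin 3 → ℂ) (z : V6) :
    P13 b c z *ᵥ blockVec 0 (tv z) = 0 := by
  simp only [P13, bb_mulVec_blockVec, Matrix.mulVec_zero, zero_add, Matrix.smul_mulVec,
    cm_mulVec, cross_self, Matrix.add_mulVec, outer_mulVec, cross_eq_crossProduct, dot_cross_self,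
    zero_smul, smul_zero, blockVec_zero]

/-- `P₁⁽³⁾` (with `b = (b₁, ib₁, 0)`, `c = (c₁, −ic₁, 0)`) annihilates
the differentials of the Casimirs `|s|²` and `|t|²`. -/
theorem P13_kills_casimirs (b1 c1 : ℂ) (z : V6) :
    (P13 ![b1, Complex.I * b1, 0] ![c1, -Complex.I * c1, 0] z).mulVec
      (fun j => pd j (fun w => dot (sv w) (sv w)) z) = 0 ∧
    (P13 ![b1, Complex.I * b1, 0] ![c1, -Complex.I * c1, 0] z).mulVec
      (fun j => pd j (fun w => dot (tv w) (tv w)) z) = 0 := by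
  rw [grad_dot_sv_self, grad_dot_tv_self, Matrix.mulVec_smul, Matrix.mulVec_smul,
    P13_mulVec_blockVec_sv_zero, P13_mulVec_blockVec_zero_tv, smul_zero]
  exact ⟨rfl, rfl⟩
end
end

section
/- The polynomial A(λ) = λ^2 − ⟨a,J⟩λ + |J|^2/4 − i⟨a, x×J⟩/(2κ) − |x|^2/(4κ^2) has Poisson-commuting coefficients with respect to the so*(4) bracket in (x,J)-variables: {⟨a,J⟩, |J|^2/4 − i⟨a, x×J⟩/(2κ) − |x|^2/(4κ^2)} = 0, where {J_i,J_j} = ε_{ijk}J_k, {J_i,x_j} = ε_{ijk}x_k, {x_i,x_j} = κ^2ε_{ijk}J_k. Consequently {A(λ), A(μ)} = 0 for all λ, μ. -/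
noncomputable section

/-- Coordinates `(x,J)`: `x` the first three, `J` the last three coordinates. -/
def xv (z : V6) (i : Fin 3) : ℂ := z (Fin.castAdd 3 i)
def Jv (z : V6) (i : Fin 3) : ℂ := z (Fin.natAdd 3 i)

/-- The `so*(4)` Lie–Poisson bivector in `(x,J)`-variables:
`{JᵢJⱼ} = εJ`, `{Jᵢ,xⱼ} = εx`, `{xᵢ,xⱼ} = κ²εJ`. -/
def Pxj (κ : ℂ) (z : V6) : Matrix (Fin 6) (Fin 6) ℂ :=
  bb (κ ^ 2 • cm (Jv z)) (cm (xv z)) (cm (xv z)) (cm (Jv z))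

/-- `A(λ) = λ² − ⟨a,J⟩λ + |J|²/4 − i⟨a,x×J⟩/(2κ) − |x|²/(4κ²)`. -/
def Acoeff (κ : ℂ) (a : Fin 3 → ℂ) (z : V6) : ℂ :=
  dot (Jv z) (Jv z) / 4 - Complex.I * dot a (cross (xv z) (Jv z)) / (2 * κ)
    - dot (xv z) (xv z) / (4 * κ ^ 2)

def Alam (κ : ℂ) (a : Fin 3 → ℂ) (lam : ℂ) (z : V6) : ℂ :=
  lam ^ 2 - dot a (Jv z) * lam + Acoeff κ a z

/-!
`⟨a,J⟩` generates the infinitesimal rotation `(x,J) ↦ (x × a, J × a)` about `a`: its bracket with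
any `g` is the derivative of `g` along this vector field. The second coefficient of `A(λ)` is built
from `|J|²`, `|x|²` and the triple product `⟨a, x × J⟩`, which are invariant under rotations about
`a`, so the two coefficients commute. Since the bracket is the skew form `Pxj` evaluated on gradients
and `∇A(λ) = -λ ∇⟨a,J⟩ + ∇(coefficient)`, it follows that `{A(λ), A(μ)} = 0`.
-/

open Matrix

section Bilinear

variable {𝕜 E : Type*} [NontriviallyNormedField 𝕜] [CompleteSpace 𝕜] [NormedAddCommGroup E]
  [NormedSpace 𝕜 E] {ι : Type*} [Fintype ι] {z : E}

@[fun_prop]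
theorem DifferentiableAt.dotProduct {u v : E → ι → 𝕜} (hu : DifferentiableAt 𝕜 u z)
    (hv : DifferentiableAt 𝕜 v z) : DifferentiableAt 𝕜 (fun w => u w ⬝ᵥ v w) z :=
  ((dotProductBilin 𝕜 𝕜 : (ι → 𝕜) →ₗ[𝕜] (ι → 𝕜) →ₗ[𝕜] 𝕜).toContinuousBilinearMap.hasFDerivAt_of_bilinear
    hu.hasFDerivAt hv.hasFDerivAt).differentiableAt

theorem fderiv_dotProduct_apply {u v : E → ι → 𝕜} (hu : DifferentiableAt 𝕜 u z)
    (hv : DifferentiableAt 𝕜 v z) (h : E) :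
    fderiv 𝕜 (fun w => u w ⬝ᵥ v w) z h = u z ⬝ᵥ fderiv 𝕜 v z h + fderiv 𝕜 u z h ⬝ᵥ v z := by
  have H : HasFDerivAt (fun w => u w ⬝ᵥ v w) _ z :=
    (dotProductBilin 𝕜 𝕜 : (ι → 𝕜) →ₗ[𝕜] (ι → 𝕜) →ₗ[𝕜] 𝕜).toContinuousBilinearMap.hasFDerivAt_of_bilinear
      hu.hasFDerivAt hv.hasFDerivAt
  rw [H.fderiv]
  simp

@[fun_prop]
theorem DifferentiableAt.crossProduct {u v : E → Fin 3 → 𝕜} (hu : DifferentiableAt 𝕜 u z)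
    (hv : DifferentiableAt 𝕜 v z) : DifferentiableAt 𝕜 (fun w => u w ⨯₃ v w) z :=
  ((_root_.crossProduct : (Fin 3 → 𝕜) →ₗ[𝕜] _).toContinuousBilinearMap.hasFDerivAt_of_bilinear
    hu.hasFDerivAt hv.hasFDerivAt).differentiableAt

theorem fderiv_crossProduct_apply {u v : E → Fin 3 → 𝕜} (hu : DifferentiableAt 𝕜 u z)
    (hv : DifferentiableAt 𝕜 v z) (h : E) :
    fderiv 𝕜 (fun w => u w ⨯₃ v w) z h = u z ⨯₃ fderiv 𝕜 v z h + fderiv 𝕜 u z h ⨯₃ v z := by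
  have H : HasFDerivAt (fun w => u w ⨯₃ v w) _ z :=
    (crossProduct : (Fin 3 → 𝕜) →ₗ[𝕜] _).toContinuousBilinearMap.hasFDerivAt_of_bilinear
      hu.hasFDerivAt hv.hasFDerivAt
  rw [H.fderiv]
  simp

end Bilinear

section SkewForm

variable {n R : Type*} [Fintype n] [CommRing R] {M : Matrix n n R}

theorem dotProduct_mulVec_swap_of_transpose_eq_neg (hM : Mᵀ = -M) (u v : n → R) :
    v ⬝ᵥ M *ᵥ u = -(u ⬝ᵥ M *ᵥ v) := by
  rw [dotProduct_mulVec, ← mulVec_transpose, hM, dotProduct_comm, neg_mulVec, dotProduct_neg]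

theorem dotProduct_mulVec_self_of_transpose_eq_neg [IsAddTorsionFree R] (hM : Mᵀ = -M)
    (u : n → R) : u ⬝ᵥ M *ᵥ u = 0 :=
  self_eq_neg.1 (dotProduct_mulVec_swap_of_transpose_eq_neg hM u u)

theorem smul_add_dotProduct_mulVec_smul_add [IsAddTorsionFree R] (hM : Mᵀ = -M) {u v : n → R}
    (huv : u ⬝ᵥ M *ᵥ v = 0) (s t : R) : (s • u + v) ⬝ᵥ M *ᵥ (t • u + v) = 0 := by
  simp only [mulVec_add, mulVec_smul, add_dotProduct, dotProduct_add, smul_dotProduct,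
    dotProduct_smul, dotProduct_mulVec_self_of_transpose_eq_neg hM,
    dotProduct_mulVec_swap_of_transpose_eq_neg hM u v, huv]
  simp

end SkewForm

theorem sumElim_comp_finSumFinEquiv_symm {α : Type*} {m n : ℕ} (u : Fin m → α) (v : Fin n → α) :
    Sum.elim u v ∘ finSumFinEquiv.symm = Fin.append u v := by
  ext i; refine Fin.addCases (fun k => ?_) (fun k => ?_) i <;> simp

theorem append_vecMul_bb (u v : Fin 3 → ℂ) (A B C D : Matrix (Fin 3) (Fin 3) ℂ) :
    Fin.append u v ᵥ* bb A B C D = Fin.append (u ᵥ* A + v ᵥ* C) (u ᵥ* B + v ᵥ* D) := by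
  rw [bb, submatrix_vecMul_equiv, Equiv.symm_symm, ← sumElim_comp_finSumFinEquiv_symm u v,
    Function.comp_assoc, Equiv.symm_comp_self, Function.comp_id, vecMul_fromBlocks,
    ← sumElim_comp_finSumFinEquiv_symm]
  rfl

theorem transpose_bb (A B C D : Matrix (Fin 3) (Fin 3) ℂ) : (bb A B C D)ᵀ = bb Aᵀ Cᵀ Bᵀ Dᵀ := by
  simp [bb, transpose_submatrix, fromBlocks_transpose]

theorem neg_bb (A B C D : Matrix (Fin 3) (Fin 3) ℂ) : -bb A B C D = bb (-A) (-B) (-C) (-D) := by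
  simp only [bb, ← fromBlocks_neg]; rfl

theorem vecMul_cm (u v : Fin 3 → ℂ) : u ᵥ* cm v = v ⨯₃ u := by
  ext i; fin_cases i <;> simp [cm, vecMul, dotProduct, Fin.sum_univ_three, cross_apply] <;> ring

theorem transpose_cm (v : Fin 3 → ℂ) : (cm v)ᵀ = -cm v := by
  ext i j; fin_cases i <;> fin_cases j <;> simp [cm]

theorem transpose_Pxj (κ : ℂ) (z : V6) : (Pxj κ z)ᵀ = -Pxj κ z := by
  simp [Pxj, transpose_bb, neg_bb, transpose_cm]

def xvL : V6 →L[ℂ] Fin 3 → ℂ :=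
  ContinuousLinearMap.pi fun i => ContinuousLinearMap.proj (Fin.castAdd 3 i)

def JvL : V6 →L[ℂ] Fin 3 → ℂ :=
  ContinuousLinearMap.pi fun i => ContinuousLinearMap.proj (Fin.natAdd 3 i)

@[fun_prop]
theorem differentiableAt_xv (z : V6) : DifferentiableAt ℂ xv z := xvL.differentiableAt

@[fun_prop]
theorem differentiableAt_Jv (z : V6) : DifferentiableAt ℂ Jv z := JvL.differentiableAt

theorem fderiv_xv_apply (z h : V6) : fderiv ℂ xv z h = xv h := by
  rw [show xv = ⇑xvL from rfl, xvL.fderiv]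

theorem fderiv_Jv_apply (z h : V6) : fderiv ℂ Jv z h = Jv h := by
  rw [show Jv = ⇑JvL from rfl, JvL.fderiv]

theorem xv_append (u v : Fin 3 → ℂ) : xv (Fin.append u v) = u := funext (Fin.append_left u v)

theorem Jv_append (u v : Fin 3 → ℂ) : Jv (Fin.append u v) = v := funext (Fin.append_right u v)

theorem Jv_single_castAdd (k : Fin 3) (c : ℂ) : Jv (Pi.single (Fin.castAdd 3 k) c) = 0 := by
  ext j; simp [Jv, Pi.single_apply, Fin.ext_iff]; omega

theorem Jv_single_natAdd (k : Fin 3) (c : ℂ) : Jv (Pi.single (Fin.natAdd 3 k) c) = Pi.single k c := by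
  ext j; simp [Jv, Pi.single_apply, Fin.ext_iff]

theorem Acoeff_eq_dotProduct (κ : ℂ) (a : Fin 3 → ℂ) :
    Acoeff κ a = fun w => Jv w ⬝ᵥ Jv w / 4 - Complex.I * (a ⬝ᵥ xv w ⨯₃ Jv w) / (2 * κ)
      - xv w ⬝ᵥ xv w / (4 * κ ^ 2) := by
  funext w
  simp only [Acoeff, dot, cross, ← cross_apply]
  rfl

theorem differentiableAt_Acoeff (κ : ℂ) (a : Fin 3 → ℂ) (z : V6) :
    DifferentiableAt ℂ (Acoeff κ a) z := by
  rw [Acoeff_eq_dotProduct]; fun_prop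

theorem fderiv_Acoeff_apply (κ : ℂ) (a : Fin 3 → ℂ) (z h : V6) :
    fderiv ℂ (Acoeff κ a) z h =
      (Jv z ⬝ᵥ Jv h + Jv h ⬝ᵥ Jv z) / 4
        - Complex.I * (a ⬝ᵥ (xv z ⨯₃ Jv h + xv h ⨯₃ Jv z)) / (2 * κ)
        - (xv z ⬝ᵥ xv h + xv h ⬝ᵥ xv z) / (4 * κ ^ 2) := by
  rw [Acoeff_eq_dotProduct]
  simp only [div_eq_mul_inv]
  simp (disch := fun_prop) only [fderiv_fun_sub, fderiv_mul_const, fderiv_const_mul,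
    _root_.sub_apply, _root_.smul_apply, smul_eq_mul, fderiv_dotProduct_apply,
    fderiv_crossProduct_apply, fderiv_xv_apply, fderiv_Jv_apply, fderiv_const_apply,
    _root_.zero_apply, zero_dotProduct, add_zero]
  ring

theorem fderiv_dot_Jv_apply (a : Fin 3 → ℂ) (z h : V6) :
    fderiv ℂ (fun w => dot a (Jv w)) z h = a ⬝ᵥ Jv h := by
  change fderiv ℂ (fun w => a ⬝ᵥ Jv w) z h = _
  simp (disch := fun_prop) [fderiv_dotProduct_apply, fderiv_Jv_apply]

def grad (f : V6 → ℂ) (z : V6) : V6 := fun i => pd i f z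

theorem grad_dotProduct (f : V6 → ℂ) (z v : V6) : grad f z ⬝ᵥ v = fderiv ℂ f z v := by
  conv_rhs => rw [pi_eq_sum_univ' v]
  simp [grad, pd, dotProduct, mul_comm]

theorem pb_eq_dotProduct_mulVec (P : V6 → Matrix (Fin 6) (Fin 6) ℂ) (f g : V6 → ℂ) (z : V6) :
    pb P f g z = grad f z ⬝ᵥ P z *ᵥ grad g z := by
  simp only [pb, grad, dotProduct, mulVec, Finset.mul_sum]
  exact Finset.sum_congr rfl fun i _ => Finset.sum_congr rfl fun j _ => by ring

theorem grad_dot_Jv (a : Fin 3 → ℂ) (z : V6) :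
    grad (fun w => dot a (Jv w)) z = Fin.append 0 a := by
  ext i
  refine Fin.addCases (m := 3) (n := 3) (fun k => ?_) (fun k => ?_) i
  · simp only [grad, pd, fderiv_dot_Jv_apply, Jv_single_castAdd, dotProduct_zero,
      Fin.append_left, Pi.zero_apply]
  · simp only [grad, pd, fderiv_dot_Jv_apply, Jv_single_natAdd, dotProduct_single, mul_one,
      Fin.append_right]

theorem grad_Alam (κ : ℂ) (a : Fin 3 → ℂ) (lam : ℂ) (z : V6) :
    grad (Alam κ a lam) z = (-lam) • grad (fun w => dot a (Jv w)) z + grad (Acoeff κ a) z := by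
  have hF : DifferentiableAt ℂ (fun w => dot a (Jv w)) z := by
    change DifferentiableAt ℂ (fun w => a ⬝ᵥ Jv w) z; fun_prop
  have hA : HasFDerivAt (Alam κ a lam) _ z :=
    ((hasFDerivAt_const (lam ^ 2) z).sub (hF.hasFDerivAt.mul_const lam)).add
      (differentiableAt_Acoeff κ a z).hasFDerivAt
  ext i
  simp [grad, pd, hA.fderiv]

theorem pb_dot_Jv_eq_fderiv (κ : ℂ) (a : Fin 3 → ℂ) (g : V6 → ℂ) (z : V6) :
    pb (Pxj κ) (fun w => dot a (Jv w)) g z =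
      fderiv ℂ g z (Fin.append (xv z ⨯₃ a) (Jv z ⨯₃ a)) := by
  rw [pb_eq_dotProduct_mulVec, dotProduct_mulVec, grad_dot_Jv, Pxj, append_vecMul_bb,
    dotProduct_comm, grad_dotProduct]
  simp [vecMul_cm]

theorem pb_dot_Jv_Acoeff (κ : ℂ) (a : Fin 3 → ℂ) (z : V6) :
    pb (Pxj κ) (fun w => dot a (Jv w)) (Acoeff κ a) z = 0 := by
  -- Leibniz rule for `a ⨯₃ ·`: the rotation moves `x ⨯₃ J` to `-(a ⨯₃ (x ⨯₃ J))`, orthogonal to `a`.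
  have hrot : xv z ⨯₃ (Jv z ⨯₃ a) + (xv z ⨯₃ a) ⨯₃ Jv z = -(a ⨯₃ (xv z ⨯₃ Jv z)) := by
    rw [leibniz_cross a, ← cross_anticomm (xv z) a, ← cross_anticomm (Jv z) a]
    simp only [map_neg, LinearMap.neg_apply]
    abel
  rw [pb_dot_Jv_eq_fderiv, fderiv_Acoeff_apply, xv_append, Jv_append, hrot,
    dotProduct_comm (Jv z ⨯₃ a), dotProduct_comm (xv z ⨯₃ a)]
  simp [dot_self_cross]

theorem Alam_selfcommute_general (κ : ℂ) (a : Fin 3 → ℂ) :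
    (∀ z : V6, pb (Pxj κ) (fun w => dot a (Jv w)) (Acoeff κ a) z = 0) ∧
    (∀ lam mu : ℂ, ∀ z : V6, pb (Pxj κ) (Alam κ a lam) (Alam κ a mu) z = 0) := by
  refine ⟨pb_dot_Jv_Acoeff κ a, fun lam mu z => ?_⟩
  have hcoeff := pb_dot_Jv_Acoeff κ a z
  rw [pb_eq_dotProduct_mulVec] at hcoeff ⊢
  rw [grad_Alam, grad_Alam]
  exact smul_add_dotProduct_mulVec_smul_add (transpose_Pxj κ z) hcoeff _ _

/-- the coefficients of `A(λ)` Poisson-commute in the `(x,J)` bracket,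
hence `{A(λ),A(μ)} = 0` for all `λ, μ`. -/
theorem Alam_selfcommute (κ : ℂ) (hκ : κ ≠ 0) (a : Fin 3 → ℂ) (ha : dot a a = 1) :
    (∀ z : V6, pb (Pxj κ) (fun w => dot a (Jv w)) (Acoeff κ a) z = 0) ∧
    (∀ lam mu : ℂ, ∀ z : V6, pb (Pxj κ) (Alam κ a lam) (Alam κ a mu) z = 0) :=
  Alam_selfcommute_general κ a
end
end
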